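/- Let K/k be a finite separable field extension and B a hereditary finite-dimensional k-algebra. Then the scalar extension B ⊗_k K is a hereditary finite-dimensional K-algebra. -/

import Mathlib

/-!
A finite separable extension `K/k` is unramified, so it has a separability idempotent
`e = ∑ yᵢ ⊗ xᵢ ∈ K ⊗ₖ K`: `∑ yᵢ xᵢ = 1` and `(c ⊗ 1) e = (1 ⊗ c) e` for all `c : K`.
Let `N` be a submodule of a projective `B ⊗ₖ K`-module `M`. Since `B ⊗ₖ K` is free over `B`,
`M` is `B`-projective, hence so is `N` because `B` is hereditary. A `B`-linear section `s` of
`(N →₀ B ⊗ₖ K) → N` averages to `n ↦ ∑ yᵢ • s (xᵢ • n)`: this is still a `B`-linear section,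
and the identity satisfied by `e` makes it `K`-linear, hence `B ⊗ₖ K`-linear. So `N` is a direct
summand of a free `B ⊗ₖ K`-module.
-/

open TensorProduct

universe u v

/-- A ring is (left) hereditary if every submodule of a projective module is projective. -/
def IsHereditaryRing (R : Type u) [Ring R] : Prop :=
  ∀ (M : Type u) [AddCommGroup M] [Module R M], Module.Projective R M →
    ∀ N : Submodule R M, Module.Projective R N

attribute [local instance] Algebra.TensorProduct.rightAlgebra

theorem Module.Projective.trans {R S M : Type*} [Semiring R] [Semiring S] [Module R S]
    [IsScalarTower R S S] [AddCommMonoid M] [Module S M] [Module R M] [IsScalarTower R S M]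
    [Module.Projective R S] [Module.Projective S M] : Module.Projective R M := by
  classical
  obtain ⟨s, hs⟩ := ‹Module.Projective S M›
  have : Module.Projective R (M →₀ S) := .of_equiv' (finsuppLequivDFinsupp R).symm
  exact .of_split (s.restrictScalars R) ((Finsupp.linearCombination S id).restrictScalars R)
    (LinearMap.ext hs)

namespace Algebra.FormallyUnramified

variable {R S : Type*} [CommRing R] [CommRing S] [Algebra R S]
  [FormallyUnramified R S] [EssFiniteType R S]
  {M N M' N' : Type*} [AddCommGroup M] [Module R M] [Module S M] [IsScalarTower R S M]
  [AddCommGroup N] [Module R N] [Module S N] [IsScalarTower R S N]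
  [AddCommGroup M'] [Module R M'] [Module S M'] [IsScalarTower R S M']
  [AddCommGroup N'] [Module R N'] [Module S N'] [IsScalarTower R S N']

variable (S) in
/-- With `elem R S = ∑ yᵢ ⊗ xᵢ`, this is `m ↦ ∑ yᵢ • g (xᵢ • m)`. -/
noncomputable def average (g : M →ₗ[R] N) : M →ₗ[S] N :=
  g.liftBaseChange S ∘ₗ sec R S M

theorem sec_comp (u : M' →ₗ[S] M) :
    sec R S M ∘ₗ u = (u.restrictScalars R).baseChange S ∘ₗ sec R S M' := by
  ext m
  simp only [sec, LinearMap.coe_comp, LinearMap.coe_mk, LinearMap.coe_toAddHom,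
    Function.comp_apply, LinearMap.flip_apply, AlgebraTensorModule.mapBilinear_apply]
  induction elem R S using TensorProduct.induction_on with
  | zero => simp
  | tmul s t => simp
  | add x y hx hy => simp only [map_add, hx, hy]

theorem average_id : average S (LinearMap.id : M →ₗ[R] M) = LinearMap.id := by
  rw [average, ← comp_sec R S M]
  congr 1

theorem average_comp (v : N →ₗ[S] N') (g : M →ₗ[R] N) :
    average S (v.restrictScalars R ∘ₗ g) = v ∘ₗ average S g := by
  rw [average, average, ← LinearMap.comp_assoc, LinearMap.liftBaseChange_comp]

theorem average_comp_restrictScalars (g : M →ₗ[R] N) (u : M' →ₗ[S] M) :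
    average S (g ∘ₗ u.restrictScalars R) = average S g ∘ₗ u := by
  rw [average, average, LinearMap.comp_assoc, sec_comp, ← LinearMap.comp_assoc]
  congr 1
  ext m
  simp

theorem average_map_smul {B : Type*} [Monoid B] [DistribMulAction B M] [SMulCommClass B S M]
    [DistribMulAction B N] [SMulCommClass B S N] (g : M →ₗ[R] N)
    (hg : ∀ (b : B) (m : M), g (b • m) = b • g m) (b : B) (m : M) :
    average S g (b • m) = b • average S g m := by
  have hgb : g ∘ₗ (DistribSMul.toLinearMap S M b).restrictScalars R =
      (DistribSMul.toLinearMap S N b).restrictScalars R ∘ₗ g :=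
    LinearMap.ext (hg b)
  calc average S g (b • m)
      = average S (g ∘ₗ (DistribSMul.toLinearMap S M b).restrictScalars R) m := by
        rw [average_comp_restrictScalars]; rfl
    _ = average S ((DistribSMul.toLinearMap S N b).restrictScalars R ∘ₗ g) m := by rw [hgb]
    _ = b • average S g m := by rw [average_comp]; rfl

theorem projective_tensorProduct_of_projective {B P : Type*} [Ring B] [Algebra R B]
    [AddCommGroup P] [Module (B ⊗[R] S) P] [Module B P] [IsScalarTower B (B ⊗[R] S) P]
    [Module.Projective B P] : Module.Projective (B ⊗[R] S) P := by
  let _ : Module S P := .compHom P (algebraMap S (B ⊗[R] S))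
  let _ : Module R P := .compHom P (algebraMap R (B ⊗[R] S))
  have : IsScalarTower S (B ⊗[R] S) P := .of_algebraMap_smul fun _ _ => rfl
  have : IsScalarTower R (B ⊗[R] S) P := .of_algebraMap_smul fun _ _ => rfl
  have : IsScalarTower R S P := .to₁₂₄ R S (B ⊗[R] S) P
  have : IsScalarTower R B P := .to₁₂₄ R B (B ⊗[R] S) P
  have : SMulCommClass B S P := ⟨fun b c p => by
    rw [← smul_one_smul (B ⊗[R] S) b, ← smul_one_smul (B ⊗[R] S) b p]
    exact smul_comm (b • (1 : B ⊗[R] S)) c p⟩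
  let π := Finsupp.linearCombination (B ⊗[R] S) (_root_.id : P → P)
  obtain ⟨s, hs⟩ := Module.projective_lifting_property (π.restrictScalars B) LinearMap.id
    fun p => ⟨Finsupp.single p 1, by simp [π]⟩
  let t := average S (s.restrictScalars R)
  have ht : ∀ (b : B) (p : P), t (b • p) = b • t p :=
    average_map_smul _ fun b p => s.map_smul b p
  let t' : P →ₗ[B ⊗[R] S] (P →₀ B ⊗[R] S) :=
    { t.toAddHom with
      map_smul' := fun a p => by
        induction a using TensorProduct.induction_on with
        | zero => simp
        | tmul b c =>
          have hbc : b ⊗ₜ[R] c = b • algebraMap S (B ⊗[R] S) c := by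
            rw [Algebra.TensorProduct.algebraMap_eq_includeRight]
            simp [smul_tmul']
          simp only [AddHom.toFun_eq_coe, LinearMap.coe_toAddHom, RingHom.id_apply, hbc,
            smul_assoc, algebraMap_smul, ht, map_smul]
        | add a a' ha ha' => simp_all [add_smul] }
  have hπs : (π.restrictScalars S).restrictScalars R ∘ₗ s.restrictScalars R = LinearMap.id :=
    LinearMap.ext fun p => congr($hs p)
  refine Module.projective_def'.mpr ⟨t', LinearMap.ext fun p => ?_⟩
  change π.restrictScalars S (t p) = p
  rw [← LinearMap.comp_apply, ← average_comp, hπs, average_id, LinearMap.id_apply]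

end Algebra.FormallyUnramified

/-- STATEMENT 15: the scalar extension of a hereditary finite-dimensional `k`-algebra
along a finite separable field extension `K/k` is a hereditary finite-dimensional
`K`-algebra. -/
theorem stmt15 (k K : Type) [Field k] [Field K] [Algebra k K]
    [FiniteDimensional k K] [Algebra.IsSeparable k K]
    (B : Type) [Ring B] [Algebra k B] [FiniteDimensional k B]
    (hB : IsHereditaryRing B) :
    IsHereditaryRing (B ⊗[k] K) ∧ FiniteDimensional K (B ⊗[k] K) := by
  have : Algebra.FormallyUnramified k K := .of_isSeparable k K
  refine ⟨fun M _ _ hM N => ?_, .of_restrictScalars_finite k K _⟩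
  let _ : Module B M := .compHom M (RingHom.smulOneHom : B →+* B ⊗[k] K)
  have : IsScalarTower B (B ⊗[k] K) M := ⟨fun b a m => by
    change (b • a) • m = (b • (1 : B ⊗[k] K)) • a • m
    rw [← mul_smul, smul_one_mul]⟩
  have : Module.Projective (B ⊗[k] K) M := hM
  have : Module.Projective B M := .trans (S := B ⊗[k] K)
  have : Module.Projective B N := hB M this (N.restrictScalars B)
  exact Algebra.FormallyUnramified.projective_tensorProduct_of_projective
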